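/- arXiv:1908.09387 — 3 statements merged into one kernel-verified Lean document; each statement's English description precedes it below -/
import Mathlib

section
/- Let V be a vertex set with edge set E, let X be a finite subset of V that is strong in a set C with X ⊆ C ⊆ V, and let Y, Z ⊆ C be finite sets, each simply algebraic over X, with Y ≠ Z. Then Y ∩ Z = ∅. -/
variable {V : Type*}

/-- Predimension of a finite set `A` in the hypergraph with edge set `E`:
`δ(A) = |A| - #{e ∈ E : e ⊆ A}`. -/
noncomputable def hdelta (E : Set (Finset V)) (A : Finset V) : ℤ :=
  (A.card : ℤ) - ({e : Finset V | e ∈ E ∧ e ⊆ A}).ncard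

/-- `A` is strong (self-sufficient) in `C`: `A ⊆ C` and `δ(A) ≤ δ(X)` for every
finite `X` with `A ⊆ X ⊆ C`. -/
def Strong (E : Set (Finset V)) (A : Finset V) (C : Set V) : Prop :=
  (↑A : Set V) ⊆ C ∧
    ∀ X : Finset V, A ⊆ X → (↑X : Set V) ⊆ C → hdelta E A ≤ hdelta E X

/-- `B` is simply algebraic over `A`. -/
def SimplyAlg [DecidableEq V] (E : Set (Finset V)) (A B : Finset V) : Prop :=
  B.Nonempty ∧ A ∩ B = ∅ ∧ Strong E A (↑(A ∪ B) : Set V) ∧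
    hdelta E (A ∪ B) - hdelta E A = 0 ∧
    ∀ B' : Finset V, B' ⊆ B → B' ≠ B → B'.Nonempty →
      hdelta E (A ∪ B') - hdelta E A ≠ 0

/-- `B` is minimally simply algebraic over `A`. -/
def MinSimplyAlg [DecidableEq V] (E : Set (Finset V)) (A B : Finset V) : Prop :=
  SimplyAlg E A B ∧ ∀ A' : Finset V, A' ⊆ A → A' ≠ A → ¬ SimplyAlg E A' B

/-- `B1` and `B2` are freely joined over `A = B1 ∩ B2`. -/
def FreelyJoined (E : Set (Finset V)) (B1 B2 : Set V) : Prop :=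
  ∀ e ∈ E, (↑e : Set V) ⊆ B1 ∪ B2 → (↑e : Set V) ⊆ B1 ∨ (↑e : Set V) ⊆ B2

lemma edges_finite (E : Set (Finset V)) (A : Finset V) :
    ({e : Finset V | e ∈ E ∧ e ⊆ A}).Finite := by
  apply Set.Finite.subset (A.powerset.finite_toSet)
  intro e he
  simpa using he.2

lemma hdelta_submod [DecidableEq V] (E : Set (Finset V)) (A B : Finset V) :
    hdelta E (A ∪ B) ≤ hdelta E A + hdelta E B - hdelta E (A ∩ B) := by
  have hcard : ((A ∪ B).card : ℤ) + (A ∩ B).card = A.card + B.card := by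
    exact_mod_cast congrArg (Nat.cast (R := ℤ)) (Finset.card_union_add_card_inter A B)
  have hsub : {e : Finset V | e ∈ E ∧ e ⊆ A} ∪ {e : Finset V | e ∈ E ∧ e ⊆ B}
      ⊆ {e : Finset V | e ∈ E ∧ e ⊆ A ∪ B} := by
    rintro e (⟨h1, h2⟩ | ⟨h1, h2⟩) <;>
      exact ⟨h1, h2.trans (by simp [Finset.subset_union_left, Finset.subset_union_right])⟩
  have hint : {e : Finset V | e ∈ E ∧ e ⊆ A} ∩ {e : Finset V | e ∈ E ∧ e ⊆ B}
      = {e : Finset V | e ∈ E ∧ e ⊆ A ∩ B} := by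
    ext e
    simp only [Set.mem_inter_iff, Set.mem_setOf_eq, Finset.subset_inter_iff]
    tauto
  have h1 : ({e : Finset V | e ∈ E ∧ e ⊆ A}).ncard + ({e : Finset V | e ∈ E ∧ e ⊆ B}).ncard
      ≤ ({e : Finset V | e ∈ E ∧ e ⊆ A ∪ B}).ncard
        + ({e : Finset V | e ∈ E ∧ e ⊆ A ∩ B}).ncard := by
    rw [← Set.ncard_union_add_ncard_inter _ _ (edges_finite E A) (edges_finite E B), hint]
    have := Set.ncard_le_ncard hsub (edges_finite E (A ∪ B))
    omega
  unfold hdelta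
  have h1' : (({e : Finset V | e ∈ E ∧ e ⊆ A}).ncard : ℤ)
      + ({e : Finset V | e ∈ E ∧ e ⊆ B}).ncard
      ≤ (({e : Finset V | e ∈ E ∧ e ⊆ A ∪ B}).ncard : ℤ)
        + ({e : Finset V | e ∈ E ∧ e ⊆ A ∩ B}).ncard := by exact_mod_cast h1
  linarith

/-- two distinct simply algebraic extensions over a strong base are disjoint. -/
theorem stmt3 [DecidableEq V] (E : Set (Finset V)) (X : Finset V) (C : Set V)
    (hX : Strong E X C) (Y Z : Finset V)
    (hY : (↑Y : Set V) ⊆ C) (hZ : (↑Z : Set V) ⊆ C)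
    (hYsa : SimplyAlg E X Y) (hZsa : SimplyAlg E X Z) (hne : Y ≠ Z) :
    Y ∩ Z = ∅ := by
  by_contra hW
  have hWne : (Y ∩ Z).Nonempty := Finset.nonempty_of_ne_empty hW
  obtain ⟨hYne, hYX, hYstrong, hYd, hYmin⟩ := hYsa
  obtain ⟨hZne, hZX, hZstrong, hZd, hZmin⟩ := hZsa
  -- δ(X) ≤ δ(X ∪ (Y ∩ Z)) from strongness of X in X ∪ Y
  have h1 : hdelta E X ≤ hdelta E (X ∪ Y ∩ Z) := by
    apply hYstrong.2 (X ∪ Y ∩ Z) Finset.subset_union_left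
    intro v hv
    simp only [Finset.coe_union, Set.mem_union, Finset.mem_coe] at hv ⊢
    rcases hv with h | h
    · exact Or.inl h
    · exact Or.inr (Finset.mem_of_mem_inter_left (by simpa using h))
  -- δ(X) ≤ δ(X ∪ Y ∪ Z) from strongness of X in C
  have h2 : hdelta E X ≤ hdelta E (X ∪ Y ∪ Z) := by
    apply hX.2 _ (Finset.subset_union_left.trans Finset.subset_union_left)
    intro v hv
    simp only [Finset.coe_union, Set.mem_union, Finset.mem_coe] at hv
    rcases hv with (h | h) | h
    · exact hX.1 h
    · exact hY h
    · exact hZ h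
  -- submodularity
  have hsm := hdelta_submod E (X ∪ Y) (X ∪ Z)
  have hu : (X ∪ Y) ∪ (X ∪ Z) = X ∪ Y ∪ Z := by
    ext v; simp; tauto
  have hi : (X ∪ Y) ∩ (X ∪ Z) = X ∪ Y ∩ Z := by
    ext v; simp; tauto
  rw [hu, hi] at hsm
  have hkey : hdelta E (X ∪ Y ∩ Z) - hdelta E X = 0 := by linarith
  by_cases hYZ : Y ∩ Z = Y
  · -- Y ⊆ Z, and Y ≠ Z, contradicting minimality of Z
    have hYsubZ : Y ⊆ Z := by rw [← hYZ]; exact Finset.inter_subset_right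
    exact hZmin Y hYsubZ hne hYne hYd
  · exact hYmin (Y ∩ Z) Finset.inter_subset_left hYZ hWne hkey
end

section
/- Let M be a finite hypergraph containing the distinct vertices a_1,…,a_k, g, h (with k ≥ 2, t > k) and let E_t be the free join of M and D_t over A = {a_1,…,a_k, g, h}: the vertex set of E_t is M ∪ B with M ∩ B = ∅, the edges contained in A ∪ B are exactly the edges of D_t, the edges contained in M are exactly the edges of M, and every edge of E_t is contained in M or in A ∪ B. Then for every X ⊆ M: δ(X, E_t) = δ(X, M), unless there exists Y ⊆ M with A ∪ X ⊆ Y and δ(Y) = δ(X, M), in which case δ(X, E_t) = δ(X, M) − 1. -/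
variable {V : Type*}

/-! The hypergraph `D_t` (for `t > k ≥ 2`), realized concretely on ℕ:
vertices `a_i = i` for `1 ≤ i ≤ k`, `g = k+1`, `h = k+2`, `b_i = k+2+i` for `1 ≤ i ≤ 2t`. -/

/-- `a_l`, with wraparound: for `l > k`, `a_l = a_i` where `1 ≤ i ≤ k`, `i ≡ l (mod k)`. -/
def aD (k l : ℕ) : ℕ := (l - 1) % k + 1

/-- the vertex `b_i`. -/
def bD (k i : ℕ) : ℕ := k + 2 + i

/-- the edge set of `D_t`. -/
def edgesD (k t : ℕ) : Set (Finset ℕ) :=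
  {e | (∃ i, 1 ≤ i ∧ i < 2 * t ∧ e = {bD k i, aD k i, bD k (i + 1)}) ∨
       e = {bD k (2 * t), k + 1, bD k 1} ∨ e = {bD k 1, k + 2, bD k (t + 1)}}

/-- `A = {a_1, …, a_k, g, h}`. -/
def AD (k : ℕ) : Finset ℕ := Finset.Icc 1 (k + 2)

/-- `B = {b_1, …, b_{2t}}`. -/
def BD (k t : ℕ) : Finset ℕ := Finset.Icc (k + 3) (k + 2 + 2 * t)

/-- `B_1 = {b_1, …, b_{t+1}}`. -/
def B1D (k t : ℕ) : Finset ℕ := Finset.Icc (k + 3) (k + 3 + t)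

/-- `B_2 = {b_{t+1}, …, b_{2t}} ∪ {b_1}`. -/
def B2D (k t : ℕ) : Finset ℕ := insert (k + 3) (Finset.Icc (k + 3 + t) (k + 2 + 2 * t))

/-- `δ(X, C) = min {δ(D) : X ⊆ D ⊆ C}`. -/
noncomputable def deltaIn (E : Set (Finset ℕ)) (X C : Finset ℕ) : ℤ :=
  sInf {d : ℤ | ∃ D : Finset ℕ, X ⊆ D ∧ D ⊆ C ∧ hdelta E D = d}


section StmtTen

lemma valSet_finite (E : Set (Finset ℕ)) (X C : Finset ℕ) :
    {d : ℤ | ∃ D : Finset ℕ, X ⊆ D ∧ D ⊆ C ∧ hdelta E D = d}.Finite := by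
  have : {d : ℤ | ∃ D : Finset ℕ, X ⊆ D ∧ D ⊆ C ∧ hdelta E D = d} ⊆
      hdelta E '' (↑C.powerset : Set (Finset ℕ)) := by
    rintro d ⟨D, _, hDC, rfl⟩
    exact ⟨D, by simpa using hDC, rfl⟩
  exact ((C.powerset.finite_toSet).image _).subset this

lemma deltaIn_le (E : Set (Finset ℕ)) {X C D : Finset ℕ} (h1 : X ⊆ D) (h2 : D ⊆ C) :
    deltaIn E X C ≤ hdelta E D :=
  csInf_le (valSet_finite E X C).bddBelow ⟨D, h1, h2, rfl⟩

lemma deltaIn_spec (E : Set (Finset ℕ)) {X C : Finset ℕ} (h : X ⊆ C) :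
    ∃ D : Finset ℕ, X ⊆ D ∧ D ⊆ C ∧ hdelta E D = deltaIn E X C := by
  have hne : {d : ℤ | ∃ D : Finset ℕ, X ⊆ D ∧ D ⊆ C ∧ hdelta E D = d}.Nonempty :=
    ⟨hdelta E X, X, subset_rfl, h, rfl⟩
  exact hne.csInf_mem (valSet_finite E X C)

/-- The `i`-th edge of `D_t`, for `1 ≤ i ≤ 2t`. -/
def FD (k t i : ℕ) : Finset ℕ :=
  if i = 2*t then {bD k (2*t), k + 1, bD k 1} else {bD k i, aD k i, bD k (i + 1)}

/-- The extra edge `{b_1, h, b_{t+1}}` of `D_t`. -/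
def epr (k t : ℕ) : Finset ℕ := {bD k 1, k + 2, bD k (t + 1)}

lemma FD_last (k t : ℕ) : FD k t (2*t) = {bD k (2*t), k + 1, bD k 1} := if_pos rfl
lemma FD_mid {k t i : ℕ} (h : i ≠ 2*t) : FD k t i = {bD k i, aD k i, bD k (i + 1)} := if_neg h

lemma mem_triple {x a b c : ℕ} : x ∈ ({a, b, c} : Finset ℕ) ↔ x = a ∨ x = b ∨ x = c := by
  simp [Finset.mem_insert]

lemma edgesD_eq (k t : ℕ) (ht : 1 ≤ t) :
    edgesD k t = FD k t '' (↑(Finset.Icc 1 (2*t)) : Set ℕ) ∪ {epr k t} := by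
  ext e
  simp only [edgesD, Set.mem_setOf_eq, Set.mem_union, Set.mem_image, Set.mem_singleton_iff,
    Finset.coe_Icc, Set.mem_Icc, epr]
  constructor
  · rintro (⟨i, h1, h2, rfl⟩ | rfl | rfl)
    · exact Or.inl ⟨i, ⟨h1, by omega⟩, FD_mid (by omega)⟩
    · exact Or.inl ⟨2*t, ⟨by omega, le_rfl⟩, FD_last k t⟩
    · exact Or.inr rfl
  · rintro (⟨i, ⟨h1, h2⟩, rfl⟩ | rfl)
    · by_cases h : i = 2*t
      · subst h; exact Or.inr (Or.inl (FD_last k t))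
      · exact Or.inl ⟨i, h1, by omega, FD_mid h⟩
    · exact Or.inr (Or.inr rfl)

lemma aD_le (k i : ℕ) (hk : 1 ≤ k) : 1 ≤ aD k i ∧ aD k i ≤ k := by
  unfold aD; constructor
  · omega
  · have := Nat.mod_lt (i-1) (show 0 < k by omega); omega

lemma aD_mem_AD (k i : ℕ) (hk : 1 ≤ k) : aD k i ∈ AD k := by
  have := aD_le k i hk; simp only [AD, Finset.mem_Icc]; omega

lemma bD_mem_BD {k t i : ℕ} (h1 : 1 ≤ i) (h2 : i ≤ 2*t) : bD k i ∈ BD k t := by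
  simp only [BD, bD, Finset.mem_Icc]; omega

lemma bD_mem_FD {k t i j : ℕ} (hk : 1 ≤ k) (h1 : 1 ≤ i) (h2 : i ≤ 2*t) (hj : 1 ≤ j) :
    bD k j ∈ FD k t i ↔ (j = i ∨ (i < 2*t ∧ j = i + 1) ∨ (i = 2*t ∧ j = 1)) := by
  have ha := aD_le k i hk
  by_cases h : i = 2*t
  · subst h
    rw [FD_last]
    simp only [mem_triple, bD, true_and]
    omega
  · rw [FD_mid h]
    simp only [mem_triple, bD, true_and]
    unfold bD aD at *
    omega

lemma bD_self_mem_FD {k t i : ℕ} (h1 : 1 ≤ i) (h2 : i ≤ 2*t) : bD k i ∈ FD k t i := by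
  by_cases h : i = 2*t
  · subst h; rw [FD_last]; simp [mem_triple]
  · rw [FD_mid h]; simp [mem_triple]

lemma FD_subset {k t i : ℕ} (hk : 1 ≤ k) (h1 : 1 ≤ i) (h2 : i ≤ 2*t) :
    FD k t i ⊆ AD k ∪ BD k t := by
  intro x hx
  rw [Finset.mem_union]
  by_cases h : i = 2*t
  · subst h
    rw [FD_last] at hx
    rcases mem_triple.1 hx with rfl | rfl | rfl
    · exact Or.inr (bD_mem_BD (by omega) le_rfl)
    · exact Or.inl (by simp only [AD, Finset.mem_Icc]; omega)
    · exact Or.inr (bD_mem_BD le_rfl (by omega))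
  · rw [FD_mid h] at hx
    rcases mem_triple.1 hx with rfl | rfl | rfl
    · exact Or.inr (bD_mem_BD h1 h2)
    · exact Or.inl (aD_mem_AD k i hk)
    · exact Or.inr (bD_mem_BD (by omega) (by omega))

lemma epr_subset {k t : ℕ} (ht : 1 ≤ t) : epr k t ⊆ AD k ∪ BD k t := by
  intro x hx
  rw [Finset.mem_union]
  rcases mem_triple.1 (by simpa [epr] using hx) with rfl | rfl | rfl
  · exact Or.inr (bD_mem_BD le_rfl (by omega))
  · exact Or.inl (by simp only [AD, Finset.mem_Icc]; omega)
  · exact Or.inr (bD_mem_BD (by omega) (by omega))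

lemma edgesD_subset {k t : ℕ} (hk : 1 ≤ k) (ht : 1 ≤ t) :
    ∀ e ∈ edgesD k t, e ⊆ AD k ∪ BD k t := by
  intro e he
  rw [edgesD_eq k t ht] at he
  rcases he with ⟨i, hi, rfl⟩ | rfl
  · simp only [Finset.coe_Icc, Set.mem_Icc] at hi
    exact FD_subset hk hi.1 hi.2
  · exact epr_subset ht

lemma edgesD_has_b {k t : ℕ} (ht : 1 ≤ t) :
    ∀ e ∈ edgesD k t, ∃ i, 1 ≤ i ∧ i ≤ 2*t ∧ bD k i ∈ e := by
  intro e he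
  rw [edgesD_eq k t ht] at he
  rcases he with ⟨i, hi, rfl⟩ | rfl
  · simp only [Finset.coe_Icc, Set.mem_Icc] at hi
    exact ⟨i, hi.1, hi.2, bD_self_mem_FD hi.1 hi.2⟩
  · exact ⟨1, le_rfl, by omega, by simp [epr, mem_triple]⟩

lemma epr_ne_FD {k t : ℕ} (hk : 1 ≤ k) (ht : 2 ≤ t) {i : ℕ} (h1 : 1 ≤ i) (h2 : i ≤ 2*t) :
    FD k t i ≠ epr k t := by
  intro h
  have m1 : bD k 1 ∈ FD k t i := by rw [h]; simp [epr, mem_triple]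
  have m2 : bD k (t+1) ∈ FD k t i := by rw [h]; simp [epr, mem_triple]
  rw [bD_mem_FD hk h1 h2 (by omega)] at m1 m2
  omega

lemma FD_inj {k t : ℕ} (hk : 1 ≤ k) (ht : 2 ≤ t) :
    Set.InjOn (FD k t) (↑(Finset.Icc 1 (2*t)) : Set ℕ) := by
  intro i hi j hj h
  simp only [Finset.coe_Icc, Set.mem_Icc] at hi hj
  have m1 : bD k i ∈ FD k t j := h ▸ bD_self_mem_FD hi.1 hi.2
  have m2 : bD k j ∈ FD k t i := h ▸ bD_self_mem_FD hj.1 hj.2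
  rw [bD_mem_FD hk hj.1 hj.2 hi.1] at m1
  rw [bD_mem_FD hk hi.1 hi.2 hj.1] at m2
  omega

lemma edgesD_ncard {k t : ℕ} (hk : 1 ≤ k) (ht : 2 ≤ t) : (edgesD k t).ncard = 2*t + 1 := by
  have hdis : Disjoint (FD k t '' (↑(Finset.Icc 1 (2*t)) : Set ℕ)) ({epr k t} : Set (Finset ℕ)) := by
    rw [Set.disjoint_singleton_right]
    rintro ⟨i, hi, h⟩
    simp only [Finset.coe_Icc, Set.mem_Icc] at hi
    exact epr_ne_FD hk ht hi.1 hi.2 h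
  rw [edgesD_eq k t (by omega),
    Set.ncard_union_eq hdis (((Finset.Icc 1 (2*t)).finite_toSet).image _) (Set.finite_singleton _),
    Set.ncard_image_of_injOn (FD_inj hk ht), Set.ncard_coe_finset, Set.ncard_singleton,
    Nat.card_Icc]
  omega

lemma cnt_core {k t : ℕ} (hk : 2 ≤ k) (ht : k < t) (W : Finset ℕ) :
    {e | e ∈ edgesD k t ∧ e ⊆ W}.ncard ≤ (W ∩ BD k t).card + 1 ∧
      ({e | e ∈ edgesD k t ∧ e ⊆ W}.ncard = (W ∩ BD k t).card + 1 → AD k ⊆ W) := by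
  have hk1 : 1 ≤ k := by omega
  have ht2 : 2 ≤ t := by omega
  set I : Set ℕ := {i | i ∈ Finset.Icc 1 (2*t) ∧ FD k t i ⊆ W} with hIdef
  have hIfin : I.Finite :=
    Set.Finite.subset ((Finset.Icc 1 (2*t)).finite_toSet) (fun i hi => hi.1)
  set S : Set (Finset ℕ) := {e | e ∈ edgesD k t ∧ e ⊆ W} with hSdef
  set U : Set (Finset ℕ) := FD k t '' I ∪ {epr k t} with hUdef
  have hUfin : U.Finite := (hIfin.image _).union (Set.finite_singleton _)
  have hSU : S ⊆ U := by
    rintro e ⟨he, hew⟩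
    rw [edgesD_eq k t (by omega)] at he
    rcases he with ⟨i, hi, rfl⟩ | rfl
    · exact Or.inl ⟨i, ⟨by simpa using hi, hew⟩, rfl⟩
    · exact Or.inr rfl
  have hImem : ∀ i ∈ I, 1 ≤ i ∧ i ≤ 2*t ∧ FD k t i ⊆ W := by
    rintro i ⟨hi, hiw⟩
    simp only [Finset.mem_Icc] at hi
    exact ⟨hi.1, hi.2, hiw⟩
  have hbsub : bD k '' I ⊆ (↑(W ∩ BD k t) : Set ℕ) := by
    rintro x ⟨i, hi, rfl⟩
    obtain ⟨h1, h2, h3⟩ := hImem i hi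
    simp only [Finset.coe_inter, Set.mem_inter_iff, Finset.mem_coe]
    exact ⟨h3 (bD_self_mem_FD h1 h2), bD_mem_BD h1 h2⟩
  have hbInj : Set.InjOn (bD k) I := fun i _ j _ h => by unfold bD at h; omega
  have hIcard : I.ncard ≤ (W ∩ BD k t).card := by
    rw [← Set.ncard_image_of_injOn hbInj]
    calc (bD k '' I).ncard ≤ (↑(W ∩ BD k t) : Set ℕ).ncard :=
          Set.ncard_le_ncard hbsub ((W ∩ BD k t).finite_toSet)
      _ = (W ∩ BD k t).card := Set.ncard_coe_finset _
  have hUcard : U.ncard ≤ (W ∩ BD k t).card + 1 := by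
    calc U.ncard ≤ (FD k t '' I).ncard + ({epr k t} : Set (Finset ℕ)).ncard :=
          Set.ncard_union_le _ _
      _ ≤ I.ncard + 1 := by
          rw [Set.ncard_singleton]
          exact Nat.add_le_add_right (Set.ncard_image_le hIfin) 1
      _ ≤ (W ∩ BD k t).card + 1 := Nat.add_le_add_right hIcard 1
  have hle : S.ncard ≤ (W ∩ BD k t).card + 1 :=
    le_trans (Set.ncard_le_ncard hSU hUfin) hUcard
  refine ⟨hle, fun heq => ?_⟩
  have hSeqU : S = U := Set.eq_of_subset_of_ncard_le hSU (by omega : U.ncard ≤ S.ncard) hUfin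
  have hIeq : I.ncard = (W ∩ BD k t).card := by
    have h1 : U.ncard = (W ∩ BD k t).card + 1 := by rw [← hSeqU]; exact heq
    have h2 : U.ncard ≤ I.ncard + 1 := by
      calc U.ncard ≤ (FD k t '' I).ncard + ({epr k t} : Set (Finset ℕ)).ncard :=
            Set.ncard_union_le _ _
        _ ≤ I.ncard + 1 := by
            rw [Set.ncard_singleton]
            exact Nat.add_le_add_right (Set.ncard_image_le hIfin) 1
    omega
  have hbeq : bD k '' I = (↑(W ∩ BD k t) : Set ℕ) := by
    apply Set.eq_of_subset_of_ncard_le hbsub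
    rw [Set.ncard_image_of_injOn hbInj, Set.ncard_coe_finset, hIeq]
  have hepr : epr k t ⊆ W := by
    have : epr k t ∈ S := by
      rw [hSeqU]; exact Or.inr rfl
    exact this.2
  have step : ∀ j, 1 ≤ j → j ≤ 2*t → bD k j ∈ W → j ∈ I := by
    intro j h1 h2 h3
    have : bD k j ∈ bD k '' I := by
      rw [hbeq]
      simp only [Finset.coe_inter, Set.mem_inter_iff, Finset.mem_coe]
      exact ⟨h3, bD_mem_BD h1 h2⟩
    obtain ⟨i, hi, hij⟩ := this
    have : i = j := by unfold bD at hij; omega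
    exact this ▸ hi
  have hb1W : bD k 1 ∈ W := hepr (by simp [epr, mem_triple])
  have key : ∀ j, 1 ≤ j → j ≤ 2*t → bD k j ∈ W := by
    intro j
    induction j with
    | zero => omega
    | succ n ih =>
      intro h1 h2
      rcases Nat.eq_or_lt_of_le (show 1 ≤ n + 1 from h1) with h | h
      · rw [← h]; exact hb1W
      · have hn1 : 1 ≤ n := by omega
        have hn2 : n ≤ 2*t := by omega
        have hnW : bD k n ∈ W := ih hn1 (by omega)
        obtain ⟨_, _, hFW⟩ := hImem n (step n hn1 hn2 hnW)
        exact hFW ((bD_mem_FD hk1 hn1 hn2 (by omega)).2 (by omega))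
  have keyI : ∀ j, 1 ≤ j → j ≤ 2*t → j ∈ I := fun j h1 h2 => step j h1 h2 (key j h1 h2)
  intro x hx
  simp only [AD, Finset.mem_Icc] at hx
  rcases (show x ≤ k ∨ x = k + 1 ∨ x = k + 2 by omega) with hxk | rfl | rfl
  · obtain ⟨_, _, hFW⟩ := hImem x (keyI x hx.1 (by omega))
    apply hFW
    rw [FD_mid (show x ≠ 2*t by omega)]
    have : aD k x = x := by
      have := Nat.mod_eq_of_lt (show x - 1 < k by omega)
      unfold aD; omega
    rw [mem_triple]
    exact Or.inr (Or.inl this.symm)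
  · obtain ⟨_, _, hFW⟩ := hImem (2*t) (keyI (2*t) (by omega) le_rfl)
    apply hFW
    rw [FD_last, mem_triple]
    exact Or.inr (Or.inl rfl)
  · exact hepr (by rw [epr, mem_triple]; exact Or.inr (Or.inl rfl))

end StmtTen

section StmtTenMain

lemma edgeSet_finite (P : Set (Finset ℕ)) (D : Finset ℕ) : {e | e ∈ P ∧ e ⊆ D}.Finite := by
  apply (D.powerset.finite_toSet).subset
  intro e he
  simpa using he.2

lemma hdelta_split {k t : ℕ} (hk : 2 ≤ k) (ht : k < t)
    {M : Finset ℕ} (hMB : M ∩ BD k t = ∅)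
    {EM E : Set (Finset ℕ)}
    (hEM : ∀ e ∈ EM, e ⊆ M)
    (hrestM : ∀ e : Finset ℕ, e ⊆ M → (e ∈ E ↔ e ∈ EM))
    (hrestD : ∀ e : Finset ℕ, e ⊆ AD k ∪ BD k t → (e ∈ E ↔ e ∈ edgesD k t))
    (hfree : ∀ e ∈ E, e ⊆ M ∨ e ⊆ AD k ∪ BD k t)
    {D : Finset ℕ} (hD : D ⊆ M ∪ BD k t) :
    hdelta E D = hdelta E (D ∩ M) + ((D ∩ BD k t).card : ℤ)
      - ({e | e ∈ edgesD k t ∧ e ⊆ D}.ncard : ℤ) := by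
  have hk1 : (1:ℕ) ≤ k := by omega
  have ht1 : (1:ℕ) ≤ t := by omega
  have hsetE : {e | e ∈ E ∧ e ⊆ D} = {e | e ∈ E ∧ e ⊆ D ∩ M} ∪ {e | e ∈ edgesD k t ∧ e ⊆ D} := by
    ext e
    simp only [Set.mem_setOf_eq, Set.mem_union]
    constructor
    · rintro ⟨he, hed⟩
      rcases hfree e he with hm | hab
      · exact Or.inl ⟨he, Finset.subset_inter hed hm⟩
      · exact Or.inr ⟨(hrestD e hab).1 he, hed⟩
    · rintro (⟨he, hed⟩ | ⟨he, hed⟩)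
      · exact ⟨he, hed.trans (Finset.inter_subset_left)⟩
      · have hab := edgesD_subset hk1 ht1 e he
        exact ⟨(hrestD e hab).2 he, hed⟩
  have hdis : Disjoint {e | e ∈ E ∧ e ⊆ D ∩ M} {e | e ∈ edgesD k t ∧ e ⊆ D} := by
    rw [Set.disjoint_left]
    rintro e ⟨he1, he2⟩ ⟨he3, he4⟩
    obtain ⟨i, hi1, hi2, hib⟩ := edgesD_has_b ht1 e he3
    have h1 : bD k i ∈ M := (he2.trans (Finset.inter_subset_right)) hib
    have h2 : bD k i ∈ BD k t := bD_mem_BD hi1 hi2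
    have : bD k i ∈ M ∩ BD k t := Finset.mem_inter.2 ⟨h1, h2⟩
    rw [hMB] at this
    exact absurd this (Finset.notMem_empty _)
  have hcardsplit : D.card = (D ∩ M).card + (D ∩ BD k t).card := by
    have h1 : D ∩ M ∪ D ∩ BD k t = D := by
      rw [← Finset.inter_union_distrib_left]
      exact Finset.inter_eq_left.2 hD
    have h2 : Disjoint (D ∩ M) (D ∩ BD k t) := by
      apply Finset.disjoint_left.2
      intro x hx1 hx2
      have : x ∈ M ∩ BD k t :=
        Finset.mem_inter.2 ⟨(Finset.mem_inter.1 hx1).2, (Finset.mem_inter.1 hx2).2⟩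
      rw [hMB] at this
      exact absurd this (Finset.notMem_empty _)
    have h3 := Finset.card_union_of_disjoint h2
    rw [h1] at h3
    omega
  have hedgeM : {e | e ∈ E ∧ e ⊆ D ∩ M} = {e | e ∈ E ∧ e ⊆ D ∩ M} := rfl
  have hcE : {e | e ∈ E ∧ e ⊆ D}.ncard
      = {e | e ∈ E ∧ e ⊆ D ∩ M}.ncard + {e | e ∈ edgesD k t ∧ e ⊆ D}.ncard := by
    rw [hsetE]
    exact Set.ncard_union_eq hdis (edgeSet_finite E _) (edgeSet_finite (edgesD k t) _)
  unfold hdelta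
  rw [hcE]
  push_cast [hcardsplit]
  ring

theorem stmt10aux (k t : ℕ) (hk : 2 ≤ k) (ht : k < t)
    (M : Finset ℕ) (hAM : AD k ⊆ M) (hMB : M ∩ BD k t = ∅)
    (EM E : Set (Finset ℕ))
    (hEM : ∀ e ∈ EM, e ⊆ M)
    (hrestM : ∀ e : Finset ℕ, e ⊆ M → (e ∈ E ↔ e ∈ EM))
    (hrestD : ∀ e : Finset ℕ, e ⊆ AD k ∪ BD k t → (e ∈ E ↔ e ∈ edgesD k t))
    (hfree : ∀ e ∈ E, e ⊆ M ∨ e ⊆ AD k ∪ BD k t)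
    (X : Finset ℕ) (hX : X ⊆ M) :
    (¬(∃ Y : Finset ℕ, Y ⊆ M ∧ AD k ∪ X ⊆ Y ∧ hdelta E Y = deltaIn E X M) →
      deltaIn E X (M ∪ BD k t) = deltaIn E X M) ∧
    ((∃ Y : Finset ℕ, Y ⊆ M ∧ AD k ∪ X ⊆ Y ∧ hdelta E Y = deltaIn E X M) →
      deltaIn E X (M ∪ BD k t) = deltaIn E X M - 1) := by
  have hk1 : (1:ℕ) ≤ k := by omega
  have ht1 : (1:ℕ) ≤ t := by omega
  have hXU : X ⊆ M ∪ BD k t := hX.trans (Finset.subset_union_left)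
  -- a general lower-bound analysis for any admissible D in M ∪ B
  have hanalysis : ∀ D : Finset ℕ, X ⊆ D → D ⊆ M ∪ BD k t →
      deltaIn E X M ≤ hdelta E D ∨
      (AD k ∪ X ⊆ D ∩ M ∧ hdelta E D = hdelta E (D ∩ M) - 1) := by
    intro D hXD hDU
    have hsplit := hdelta_split hk ht hMB hEM hrestM hrestD hfree hDU
    have hXDM : X ⊆ D ∩ M := Finset.subset_inter hXD hX
    have hDMle : deltaIn E X M ≤ hdelta E (D ∩ M) :=
      deltaIn_le E hXDM (Finset.inter_subset_right)
    obtain ⟨hcle, hceq⟩ := cnt_core hk ht D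
    rcases Nat.eq_or_lt_of_le hcle with heq | hlt
    · right
      have hADD : AD k ⊆ D := hceq heq
      have hADDM : AD k ⊆ D ∩ M := Finset.subset_inter hADD hAM
      refine ⟨Finset.union_subset hADDM hXDM, ?_⟩
      rw [hsplit, heq]
      push_cast
      ring
    · left
      have : ({e | e ∈ edgesD k t ∧ e ⊆ D}.ncard : ℤ) ≤ ((D ∩ BD k t).card : ℤ) := by
        exact_mod_cast Nat.lt_succ_iff.1 hlt
      omega
  constructor
  · -- no such Y
    intro hno
    apply le_antisymm
    · obtain ⟨D0, h1, h2, h3⟩ := deltaIn_spec E hX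
      rw [← h3]
      exact deltaIn_le E h1 (h2.trans (Finset.subset_union_left))
    · obtain ⟨D, h1, h2, h3⟩ := deltaIn_spec E hXU
      rw [← h3]
      rcases hanalysis D h1 h2 with h | ⟨hsub, heq⟩
      · exact h
      · have hYM : D ∩ M ⊆ M := Finset.inter_subset_right
        have hne : hdelta E (D ∩ M) ≠ deltaIn E X M := fun hc => hno ⟨D ∩ M, hYM, hsub, hc⟩
        have hge : deltaIn E X M ≤ hdelta E (D ∩ M) :=
          deltaIn_le E ((Finset.subset_union_right).trans hsub) hYM
        omega
  · -- Y exists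
    rintro ⟨Y, hYM, hAXY, hYd⟩
    apply le_antisymm
    · -- upper bound: take D = Y ∪ B
      have hADY : AD k ⊆ Y := (Finset.subset_union_left).trans hAXY
      have hXY : X ⊆ Y := (Finset.subset_union_right).trans hAXY
      set D := Y ∪ BD k t with hDdef
      have hDU : D ⊆ M ∪ BD k t := Finset.union_subset_union hYM subset_rfl
      have hXD : X ⊆ D := hXY.trans (Finset.subset_union_left)
      have hsplit := hdelta_split hk ht hMB hEM hrestM hrestD hfree hDU
      have hDM : D ∩ M = Y := by
        rw [hDdef, Finset.union_inter_distrib_right, Finset.inter_eq_left.2 hYM,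
          Finset.inter_comm (BD k t) M, hMB, Finset.union_empty]
      have hDB : D ∩ BD k t = BD k t := Finset.inter_eq_right.2 (Finset.subset_union_right)
      have hBcard : (BD k t).card = 2*t := by
        rw [BD, Nat.card_Icc]; omega
      have hcnt : {e | e ∈ edgesD k t ∧ e ⊆ D}.ncard = 2*t + 1 := by
        have : {e | e ∈ edgesD k t ∧ e ⊆ D} = edgesD k t := by
          ext e
          simp only [Set.mem_setOf_eq, and_iff_left_iff_imp]
          intro he
          refine (edgesD_subset hk1 ht1 e he).trans ?_
          exact Finset.union_subset_union hADY subset_rfl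
        rw [this]
        exact edgesD_ncard hk1 (by omega)
      have hdD : hdelta E D = deltaIn E X M - 1 := by
        rw [hsplit, hDM, hDB, hBcard, hcnt, hYd]
        push_cast
        ring
      rw [← hdD]
      exact deltaIn_le E hXD hDU
    · -- lower bound
      obtain ⟨D, h1, h2, h3⟩ := deltaIn_spec E hXU
      rw [← h3]
      rcases hanalysis D h1 h2 with h | ⟨hsub, heq⟩
      · omega
      · have hge : deltaIn E X M ≤ hdelta E (D ∩ M) :=
          deltaIn_le E ((Finset.subset_union_right).trans hsub) (Finset.inter_subset_right)
        omega

end StmtTenMain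

/-- effect of freely joining `D_t` onto a finite hypergraph `M` over
`A` on the dimension `δ(X, ·)` of subsets `X ⊆ M`. -/
theorem stmt10 (k t : ℕ) (hk : 2 ≤ k) (ht : k < t)
    (M : Finset ℕ) (hAM : AD k ⊆ M) (hMB : M ∩ BD k t = ∅)
    (EM E : Set (Finset ℕ))
    (hEM : ∀ e ∈ EM, e ⊆ M)
    (hrestM : ∀ e : Finset ℕ, e ⊆ M → (e ∈ E ↔ e ∈ EM))
    (hrestD : ∀ e : Finset ℕ, e ⊆ AD k ∪ BD k t → (e ∈ E ↔ e ∈ edgesD k t))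
    (hfree : ∀ e ∈ E, e ⊆ M ∨ e ⊆ AD k ∪ BD k t)
    (X : Finset ℕ) (hX : X ⊆ M) :
    (¬(∃ Y : Finset ℕ, Y ⊆ M ∧ AD k ∪ X ⊆ Y ∧ hdelta E Y = deltaIn E X M) →
      deltaIn E X (M ∪ BD k t) = deltaIn E X M) ∧
    ((∃ Y : Finset ℕ, Y ⊆ M ∧ AD k ∪ X ⊆ Y ∧ hdelta E Y = deltaIn E X M) →
      deltaIn E X (M ∪ BD k t) = deltaIn E X M - 1) := by
  exact stmt10aux k t hk ht M hAM hMB EM E hEM hrestM hrestD hfree X hX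
end

section
/- Let V be a vertex set with edge set E and let C be minimally simply algebraic over F. Then every element of F lies in at least one edge e with e ⊆ F ∪ C and e ⊄ F, and if |C| ≥ 2 then every element of C lies in at least two distinct edges e with e ⊆ F ∪ C. -/
variable {V : Type*}

private lemma es_finite (E : Set (Finset V)) (A : Finset V) :
    {e : Finset V | e ∈ E ∧ e ⊆ A}.Finite := by
  apply Set.Finite.subset (A.powerset : Finset (Finset V)).finite_toSet
  intro e he
  simpa [Finset.mem_powerset] using he.2

private lemma ncard_split [DecidableEq V] (E : Set (Finset V)) (X : Finset V) (x : V)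
    (hx : x ∉ X) :
    {e : Finset V | e ∈ E ∧ e ⊆ insert x X}.ncard
      = {e : Finset V | e ∈ E ∧ e ⊆ X}.ncard
        + {e : Finset V | e ∈ E ∧ e ⊆ insert x X ∧ x ∈ e}.ncard := by
  have hu : {e : Finset V | e ∈ E ∧ e ⊆ insert x X}
      = {e : Finset V | e ∈ E ∧ e ⊆ X} ∪ {e : Finset V | e ∈ E ∧ e ⊆ insert x X ∧ x ∈ e} := by
    ext e
    simp only [Set.mem_setOf_eq, Set.mem_union]
    constructor
    · rintro ⟨he, hsub⟩
      by_cases hxe : x ∈ e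
      · exact Or.inr ⟨he, hsub, hxe⟩
      · refine Or.inl ⟨he, fun y hy => ?_⟩
        rcases Finset.mem_insert.1 (hsub hy) with rfl | hh
        · exact absurd hy hxe
        · exact hh
    · rintro (⟨he, hsub⟩ | ⟨he, hsub, _⟩)
      · exact ⟨he, hsub.trans (Finset.subset_insert _ _)⟩
      · exact ⟨he, hsub⟩
  rw [hu, Set.ncard_union_eq (Set.disjoint_left.2 fun e he1 he2 => hx (he1.2 he2.2.2))
    (es_finite E X) (Set.Finite.subset (es_finite E (insert x X)) fun e he => ⟨he.1, he.2.1⟩)]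

private lemma hdelta_insert [DecidableEq V] (E : Set (Finset V)) (X : Finset V) (x : V)
    (hx : x ∉ X) :
    hdelta E (insert x X) = hdelta E X + 1
      - ({e : Finset V | e ∈ E ∧ e ⊆ insert x X ∧ x ∈ e}).ncard := by
  unfold hdelta
  rw [Finset.card_insert_of_notMem hx, ncard_split E X x hx]
  push_cast
  ring

/-- in a minimally simply algebraic extension, every base element lies in an
edge leaving the base, and (if |C| ≥ 2) every extension element lies in two distinct edges. -/
theorem stmt11 [DecidableEq V] (E : Set (Finset V)) (F C : Finset V)
    (h : MinSimplyAlg E F C) :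
    (∀ x ∈ F, ∃ e ∈ E, e ⊆ F ∪ C ∧ ¬ e ⊆ F ∧ x ∈ e) ∧
      (2 ≤ C.card → ∀ x ∈ C, ∃ e₁ ∈ E, ∃ e₂ ∈ E, e₁ ≠ e₂ ∧
        e₁ ⊆ F ∪ C ∧ e₂ ⊆ F ∪ C ∧ x ∈ e₁ ∧ x ∈ e₂) := by
  obtain ⟨⟨hCne, hdisj, ⟨-, hstrong⟩, hδ0, hminC⟩, hminF⟩ := h
  have hnotC : ∀ y ∈ F, y ∉ C := by
    intro y hyF hyC
    exact (Finset.eq_empty_iff_forall_notMem.1 hdisj y) (Finset.mem_inter.2 ⟨hyF, hyC⟩)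
  constructor
  · intro x hxF
    by_contra hcon
    push_neg at hcon
    set F' := F.erase x with hF'
    have hxF' : x ∉ F' := Finset.notMem_erase x F
    have hins : insert x F' = F := Finset.insert_erase hxF
    have hxC : x ∉ C := hnotC x hxF
    set k := ({e : Finset V | e ∈ E ∧ e ⊆ F ∧ x ∈ e}).ncard with hk
    have key : ∀ X : Finset V, F' ⊆ X → X ⊆ F' ∪ C →
        {e : Finset V | e ∈ E ∧ e ⊆ insert x X ∧ x ∈ e}
          = {e : Finset V | e ∈ E ∧ e ⊆ F ∧ x ∈ e} := by
      intro X hF'X hXsub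
      ext e
      simp only [Set.mem_setOf_eq]
      constructor
      · rintro ⟨he, hsub, hxe⟩
        refine ⟨he, ?_, hxe⟩
        have hsub2 : e ⊆ F ∪ C := by
          intro y hy
          rcases Finset.mem_insert.1 (hsub hy) with rfl | hyX
          · exact Finset.mem_union_left _ hxF
          · rcases Finset.mem_union.1 (hXsub hyX) with hy1 | hy2
            · exact Finset.mem_union_left _ (Finset.erase_subset x F hy1)
            · exact Finset.mem_union_right _ hy2
        by_contra hns
        exact hcon e he hsub2 hns hxe
      · rintro ⟨he, hsub, hxe⟩
        refine ⟨he, ?_, hxe⟩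
        refine hsub.trans ?_
        rw [← hins]
        exact Finset.insert_subset_insert x hF'X
    have hnotin : ∀ X : Finset V, X ⊆ F' ∪ C → x ∉ X := by
      intro X hX hxX
      rcases Finset.mem_union.1 (hX hxX) with h1 | h2
      · exact hxF' h1
      · exact hxC h2
    have hdins : ∀ X : Finset V, F' ⊆ X → X ⊆ F' ∪ C →
        hdelta E (insert x X) = hdelta E X + 1 - k := by
      intro X h1 h2
      rw [hdelta_insert E X x (hnotin X h2), key X h1 h2]
    have hδF : hdelta E F = hdelta E F' + 1 - k := by
      have := hdins F' (subset_refl F') Finset.subset_union_left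
      rwa [hins] at this
    have hFC' : ∀ C' : Finset V, insert x (F' ∪ C') = F ∪ C' := by
      intro C'; rw [← Finset.insert_union, hins]
    have hSA : SimplyAlg E F' C := by
      refine ⟨hCne, ?_, ⟨Finset.coe_subset.2 Finset.subset_union_left, ?_⟩, ?_, ?_⟩
      · have hsb : F' ∩ C ⊆ F ∩ C :=
          Finset.inter_subset_inter (Finset.erase_subset x F) (subset_refl C)
        rw [hdisj] at hsb
        exact Finset.subset_empty.1 hsb
      · intro X hF'X hXc
        have hXsub : X ⊆ F' ∪ C := Finset.coe_subset.1 hXc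
        have h1 := hdins X hF'X hXsub
        have hins2 : insert x X ⊆ F ∪ C := by
          rw [← hFC' C]; exact Finset.insert_subset_insert x hXsub
        have h2 := hstrong (insert x X)
          (by rw [← hins]; exact Finset.insert_subset_insert x hF'X)
          (Finset.coe_subset.2 hins2)
        linarith
      · have h1 := hdins (F' ∪ C) Finset.subset_union_left (subset_refl _)
        rw [hFC' C] at h1
        linarith
      · intro B' hB'C hB'ne hB'nonempty
        have h1 := hdins (F' ∪ B') Finset.subset_union_left
          (Finset.union_subset_union_right hB'C)
        rw [hFC' B'] at h1
        have h2 := hminC B' hB'C hB'ne hB'nonempty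
        intro hcontra
        apply h2
        linarith
    refine hminF F' (Finset.erase_subset x F) ?_ hSA
    intro hh
    rw [hh] at hxF'
    exact hxF' hxF
  · intro hcard x hxC
    by_contra hcon
    push_neg at hcon
    set S := {e : Finset V | e ∈ E ∧ e ⊆ F ∪ C ∧ x ∈ e} with hS
    have hSsub : S.Subsingleton := by
      intro e₁ h1 e₂ h2
      by_contra hne
      exact hcon e₁ h1.1 e₂ h2.1 hne h1.2.1 h2.2.1 h1.2.2 h2.2.2
    have hxF : x ∉ F := fun hh => hnotC x hh hxC
    set C' := C.erase x with hC'
    have hxC' : x ∉ F ∪ C' := by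
      simp only [Finset.mem_union, not_or, hC']
      exact ⟨hxF, Finset.notMem_erase x C⟩
    have hinsC : insert x (F ∪ C') = F ∪ C := by
      rw [← Finset.union_insert, Finset.insert_erase hxC]
    have hd := hdelta_insert E (F ∪ C') x hxC'
    rw [hinsC] at hd
    rw [← hS] at hd
    rcases hSsub.eq_empty_or_singleton with hE | ⟨e₀, hE⟩
    · rw [hE, Set.ncard_empty] at hd
      have hstr := hstrong (F ∪ C') Finset.subset_union_left
        (Finset.coe_subset.2 (Finset.union_subset_union_right (Finset.erase_subset x C)))
      push_cast at hd
      linarith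
    · rw [hE, Set.ncard_singleton] at hd
      have hC'ne : C'.Nonempty := by
        rw [← Finset.card_pos, hC', Finset.card_erase_of_mem hxC]
        omega
      have hC'neq : C' ≠ C := by
        intro hh
        have := Finset.notMem_erase x C
        rw [← hC', hh] at this
        exact this hxC
      refine hminC C' (Finset.erase_subset x C) hC'neq hC'ne ?_
      push_cast at hd
      linarith
end
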